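/- arXiv:1903.02868 — 2 statements merged into one kernel-verified Lean document; each statement's English description precedes it below -/
import Mathlib

section
/- In a 2-agent m×n general-sum game, if the projected partial derivatives at a strategy pair (α*,β*) ∈ Δ₁×Δ₂ are zero, i.e., P_{Δ₁}(α*, ∂_α V_r(α*,β*)) = 0 and P_{Δ₂}(β*, ∂_β V_c(α*,β*)) = 0, then (α*,β*) is a Nash equilibrium. -/
/- Common framework for 2-agent m×n general-sum normal-form games
   (parametrized so the game has (m+1) × (n+1) actions and independent
   strategy coordinates live in ℝ^m and ℝ^n). -/

open Matrix Filter Topology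
open scoped RealInnerProductSpace

noncomputable section

/-- Strategy space carrier: ℝ^m with the Euclidean structure. -/
abbrev Str (m : ℕ) := EuclideanSpace ℝ (Fin m)

/-- The valid strategy set Δ = {x : xᵢ ≥ 0, ∑ xᵢ ≤ 1}. -/
def simplexSet (m : ℕ) : Set (Str m) := {x | (∀ i, 0 ≤ x i) ∧ ∑ i, x i ≤ 1}

/-- α̃ = (α ; 1 − eᵀα). -/
def tilde {m : ℕ} (x : Str m) : Fin (m + 1) → ℝ :=
  Fin.snoc (fun i => x i) (1 - ∑ i, x i)

/-- Row player's expected payoff V_r(α, β) = α̃ᵀ R β̃. -/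
def Vr {m n : ℕ} (R : Matrix (Fin (m + 1)) (Fin (n + 1)) ℝ) (α : Str m) (β : Str n) : ℝ :=
  tilde α ⬝ᵥ (R *ᵥ tilde β)

/-- Column player's expected payoff V_c(α, β) = α̃ᵀ C β̃. -/
def Vc {m n : ℕ} (C : Matrix (Fin (m + 1)) (Fin (n + 1)) ℝ) (α : Str m) (β : Str n) : ℝ :=
  tilde α ⬝ᵥ (C *ᵥ tilde β)

/-- ∂_α V_r(α, β) (gradient of the affine map α ↦ V_r(α, β)). -/
def gradR {m n : ℕ} (R : Matrix (Fin (m + 1)) (Fin (n + 1)) ℝ) (β : Str n) : Str m :=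
  (WithLp.equiv 2 _).symm fun i : Fin m =>
    (R *ᵥ tilde β) i.castSucc - (R *ᵥ tilde β) (Fin.last m)

/-- ∂_β V_c(α, β) (gradient of the affine map β ↦ V_c(α, β)). -/
def gradC {m n : ℕ} (C : Matrix (Fin (m + 1)) (Fin (n + 1)) ℝ) (α : Str m) : Str n :=
  (WithLp.equiv 2 _).symm fun j : Fin n =>
    (Cᵀ *ᵥ tilde α) j.castSucc - (Cᵀ *ᵥ tilde α) (Fin.last n)

/-- (α, β) is a Nash equilibrium. -/
def IsNash {m n : ℕ} (R C : Matrix (Fin (m + 1)) (Fin (n + 1)) ℝ)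
    (α : Str m) (β : Str n) : Prop :=
  α ∈ simplexSet m ∧ β ∈ simplexSet n ∧
    (∀ α' ∈ simplexSet m, Vr R α' β ≤ Vr R α β) ∧
    (∀ β' ∈ simplexSet n, Vc C α β' ≤ Vc C α β)

/-- `P` is the Euclidean nearest-point projection onto `Δ`. -/
def IsProjOn {m : ℕ} (Δ : Set (Str m)) (P : Str m → Str m) : Prop :=
  ∀ x, P x ∈ Δ ∧ ∀ z ∈ Δ, dist x (P x) ≤ dist x z

/-- δ = max entry − min entry of a payoff matrix. -/
def matSpread {m n : ℕ} (M : Matrix (Fin (m + 1)) (Fin (n + 1)) ℝ) : ℝ :=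
  (Finset.univ.sup' Finset.univ_nonempty fun p : Fin (m + 1) × Fin (n + 1) => M p.1 p.2)
  - (Finset.univ.inf' Finset.univ_nonempty fun p : Fin (m + 1) × Fin (n + 1) => M p.1 p.2)

/-- Conditions 1–3 on the initial prediction length γ₀ and the step size η. -/
def Conds {m n : ℕ} (R C : Matrix (Fin (m + 1)) (Fin (n + 1)) ℝ) (γ₀ η : ℝ) : Prop :=
  0 < γ₀ ∧ 0 < η ∧
  4 * γ₀ ^ 2 * matSpread R * matSpread C < 1 ∧
  η < 1 / (matSpread R + matSpread C) ∧ γ₀ < 1 / (matSpread R + matSpread C)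

/-- Both agents follow GA-SPP: `a`,`b` are the strategies, `abar`,`bbar` the
predictions, `γ` the prediction lengths, `η` the step size, `P₁`,`P₂` the
projections onto the respective simplices. -/
def GASPPRun {m n : ℕ} (R C : Matrix (Fin (m + 1)) (Fin (n + 1)) ℝ)
    (P₁ : Str m → Str m) (P₂ : Str n → Str n) (η : ℝ) (γ : ℕ → ℝ)
    (a abar : ℕ → Str m) (b bbar : ℕ → Str n) : Prop :=
  ∀ k : ℕ,
    abar (k + 1) = P₁ (a k + γ k • gradR R (b k)) ∧
    bbar (k + 1) = P₂ (b k + γ k • gradC C (a k)) ∧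
    ((abar (k + 1) = a k ∧ bbar (k + 1) = b k) →
        a (k + 1) = a k ∧ b (k + 1) = b k ∧ γ (k + 1) = γ k) ∧
    (¬(abar (k + 1) = a k ∧ bbar (k + 1) = b k) →
        a (k + 1) = P₁ (a k + η • gradR R (bbar (k + 1))) ∧
        b (k + 1) = P₂ (b k + η • gradC C (abar (k + 1))) ∧
        ((a (k + 1) = a k ∧ b (k + 1) = b k) →
            ∃ μ : ℝ, 0 < μ ∧ μ < 1 ∧ γ (k + 1) = μ * γ k) ∧
        (¬(a (k + 1) = a k ∧ b (k + 1) = b k) → γ (k + 1) = γ k))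

/-- The row agent follows GA-SPP while the column agent follows basic
gradient ascent (GA), based on the opponent's current strategy. -/
def GASPPvsGARun {m n : ℕ} (R C : Matrix (Fin (m + 1)) (Fin (n + 1)) ℝ)
    (P₁ : Str m → Str m) (P₂ : Str n → Str n) (η : ℝ) (γ : ℕ → ℝ)
    (a abar : ℕ → Str m) (b bbar : ℕ → Str n) : Prop :=
  ∀ k : ℕ,
    abar (k + 1) = P₁ (a k + γ k • gradR R (b k)) ∧
    bbar (k + 1) = P₂ (b k + γ k • gradC C (a k)) ∧
    ((abar (k + 1) = a k ∧ bbar (k + 1) = b k) →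
        a (k + 1) = a k ∧ b (k + 1) = b k ∧ γ (k + 1) = γ k) ∧
    (¬(abar (k + 1) = a k ∧ bbar (k + 1) = b k) →
        a (k + 1) = P₁ (a k + η • gradR R (bbar (k + 1))) ∧
        b (k + 1) = P₂ (b k + η • gradC C (a k)) ∧
        ((a (k + 1) = a k ∧ b (k + 1) = b k) →
            ∃ μ : ℝ, 0 < μ ∧ μ < 1 ∧ γ (k + 1) = μ * γ k) ∧
        (¬(a (k + 1) = a k ∧ b (k + 1) = b k) → γ (k + 1) = γ k))

/-- The normalized value function Φ(v, w) = V_r(α¹, β²) + V_c(α², β¹),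
for v = (α¹, β¹), w = (α², β²). -/
def Phi {m n : ℕ} (R C : Matrix (Fin (m + 1)) (Fin (n + 1)) ℝ)
    (v w : Str m × Str n) : ℝ :=
  Vr R v.1 w.2 + Vc C w.1 v.2

/-- Positive semi-definite game. -/
def IsPSD {m n : ℕ} (R C : Matrix (Fin (m + 1)) (Fin (n + 1)) ℝ) : Prop :=
  ∀ v w : Str m × Str n, v.1 ∈ simplexSet m → v.2 ∈ simplexSet n →
    w.1 ∈ simplexSet m → w.2 ∈ simplexSet n →
    0 ≤ Phi R C w w - Phi R C w v - Phi R C v w + Phi R C v v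

/-- u_r = r₁ − r₂ − b_r e for a 2×(n+1) game. -/
def uR {n : ℕ} (R : Matrix (Fin 2) (Fin (n + 1)) ℝ) : Fin n → ℝ := fun j =>
  R 0 j.castSucc - R 1 j.castSucc - (R 0 (Fin.last n) - R 1 (Fin.last n))

/-- u_c = c₁ − c₂ − (c_{1n} − c_{2n}) e for a 2×(n+1) game. -/
def uC {n : ℕ} (C : Matrix (Fin 2) (Fin (n + 1)) ℝ) : Fin n → ℝ := fun j =>
  C 0 j.castSucc - C 1 j.castSucc - (C 0 (Fin.last n) - C 1 (Fin.last n))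

end

/-
If the projected direction `P_Δ(x, v)` vanishes, then `v` lies in the normal cone of `Δ` at `x`,
i.e. `⟪v, z - x⟫ ≤ 0` for every `z ∈ Δ`: divide the variational inequality of the nearest-point
projection at `x + η v` by `η` and pass to the limit `η → 0⁺`. Since each payoff is
affine in the agent's own strategy with gradient `∂_α V_r` (resp. `∂_β V_c`), the normal-cone
condition says precisely that no deviation within the simplex increases that payoff.
-/

theorem convex_simplexSet (m : ℕ) : Convex ℝ (simplexSet m) := by
  intro x hx y hy s t hs ht hst
  refine ⟨fun i => ?_, ?_⟩
  · change 0 ≤ s * x i + t * y i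
    exact add_nonneg (mul_nonneg hs (hx.1 i)) (mul_nonneg ht (hy.1 i))
  · have hsum : ∑ i, (s • x + t • y) i = s * ∑ i, x i + t * ∑ i, y i := by
      simp [Finset.mul_sum, Finset.sum_add_distrib]
    rw [hsum]
    nlinarith [hx.2, hy.2]

section NearestPoint

variable {E : Type*} [NormedAddCommGroup E] [InnerProductSpace ℝ E] {Δ : Set E}

theorem inner_sub_le_zero_of_isNearest (hΔ : Convex ℝ Δ) {u p : E} (hp : p ∈ Δ)
    (hmin : ∀ z ∈ Δ, dist u p ≤ dist u z) {z : E} (hz : z ∈ Δ) :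
    ⟪u - p, z - p⟫ ≤ 0 := by
  have : Nonempty Δ := ⟨⟨p, hp⟩⟩
  refine (norm_eq_iInf_iff_real_inner_le_zero hΔ hp).1 (le_antisymm ?_ ?_) z hz
  · exact le_ciInf fun w => by simpa [dist_eq_norm] using hmin w w.2
  · exact ciInf_le ⟨0, fun r ⟨w, hw⟩ => hw ▸ norm_nonneg _⟩ (⟨p, hp⟩ : Δ)

theorem inner_sub_le_zero_of_tendsto_projDir (hΔ : Convex ℝ Δ) {P : E → E}
    (hP : ∀ y, P y ∈ Δ ∧ ∀ z ∈ Δ, dist y (P y) ≤ dist y z) {x v : E}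
    (hdir : Tendsto (fun η : ℝ => η⁻¹ • (P (x + η • v) - x)) (𝓝[>] 0) (𝓝 0))
    {z : E} (hz : z ∈ Δ) :
    ⟪v, z - x⟫ ≤ 0 := by
  set g : ℝ → E := fun η => η⁻¹ • (P (x + η • v) - x)
  have hηg : Tendsto (fun η : ℝ => η • g η) (𝓝[>] 0) (𝓝 0) := by
    simpa using (tendsto_id.mono_left nhdsWithin_le_nhds).smul hdir
  have hlim : Tendsto (fun η : ℝ => ⟪v - g η, z - x - η • g η⟫) (𝓝[>] 0) (𝓝 ⟪v, z - x⟫) := by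
    simpa using (tendsto_const_nhds.sub hdir).inner (tendsto_const_nhds.sub hηg)
  refine le_of_tendsto hlim ?_
  filter_upwards [self_mem_nhdsWithin] with η (hη : 0 < η)
  have hPη : P (x + η • v) = x + η • g η := by
    simp [g, smul_smul, mul_inv_cancel₀ hη.ne']
  have hvi := inner_sub_le_zero_of_isNearest hΔ (hP (x + η • v)).1 (hP _).2 hz
  rw [hPη, show x + η • v - (x + η • g η) = η • (v - g η) by rw [smul_sub]; abel,
    show z - (x + η • g η) = z - x - η • g η by abel, real_inner_smul_left] at hvi
  exact nonpos_of_mul_nonpos_right hvi hη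

end NearestPoint

section Payoffs

variable {m n : ℕ}

theorem tilde_dotProduct_sub (w : Fin (m + 1) → ℝ) (x y : Str m) :
    tilde x ⬝ᵥ w - tilde y ⬝ᵥ w =
      ⟪(WithLp.equiv 2 _).symm fun i : Fin m => w i.castSucc - w (Fin.last m), x - y⟫ := by
  simp only [dotProduct, tilde, Fin.sum_univ_castSucc, Fin.snoc_castSucc, Fin.snoc_last,
    PiLp.inner_apply, PiLp.sub_apply, RCLike.inner_apply, conj_trivial, WithLp.equiv_symm_apply,
    sub_mul, mul_sub, Finset.sum_sub_distrib, ← Finset.sum_mul]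
  ring

theorem Vr_sub_Vr (R : Matrix (Fin (m + 1)) (Fin (n + 1)) ℝ) (β : Str n) (α' α : Str m) :
    Vr R α' β - Vr R α β = ⟪gradR R β, α' - α⟫ :=
  tilde_dotProduct_sub _ α' α

theorem Vc_sub_Vc (C : Matrix (Fin (m + 1)) (Fin (n + 1)) ℝ) (α : Str m) (β' β : Str n) :
    Vc C α β' - Vc C α β = ⟪gradC C α, β' - β⟫ := by
  have hVc : ∀ β : Str n, Vc C α β = tilde β ⬝ᵥ (Cᵀ *ᵥ tilde α) := fun β => by
    rw [Vc, dotProduct_mulVec, dotProduct_comm, mulVec_transpose]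
  rw [hVc, hVc]
  exact tilde_dotProduct_sub _ β' β

end Payoffs

/-- Lemma 1: if the projected partial derivatives at
(α*, β*) ∈ Δ₁ × Δ₂ vanish, then (α*, β*) is a Nash equilibrium. -/
theorem stmt0 {m n : ℕ} (R C : Matrix (Fin (m + 1)) (Fin (n + 1)) ℝ)
    (P₁ : Str m → Str m) (P₂ : Str n → Str n)
    (hP₁ : IsProjOn (simplexSet m) P₁) (hP₂ : IsProjOn (simplexSet n) P₂)
    (αs : Str m) (βs : Str n)
    (hαs : αs ∈ simplexSet m) (hβs : βs ∈ simplexSet n)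
    (hPα : Filter.Tendsto (fun η : ℝ => η⁻¹ • (P₁ (αs + η • gradR R βs) - αs))
      (nhdsWithin 0 (Set.Ioi 0)) (nhds 0))
    (hPβ : Filter.Tendsto (fun η : ℝ => η⁻¹ • (P₂ (βs + η • gradC C αs) - βs))
      (nhdsWithin 0 (Set.Ioi 0)) (nhds 0)) :
    IsNash R C αs βs := by
  refine ⟨hαs, hβs, fun α' hα' => ?_, fun β' hβ' => ?_⟩
  · have := inner_sub_le_zero_of_tendsto_projDir (convex_simplexSet m) hP₁ hPα hα'
    linarith [Vr_sub_Vr R βs α' αs]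
  · have := inner_sub_le_zero_of_tendsto_projDir (convex_simplexSet n) hP₂ hPβ hβ'
    linarith [Vc_sub_Vc C αs β' βs]
end

section
/- A 2-agent 2×n general-sum game is positive semi-definite if and only if u_r + u_c = 0 in ℝ^{n−1}. -/
/- Common framework for 2-agent m×n general-sum normal-form games
   (parametrized so the game has (m+1) × (n+1) actions and independent
   strategy coordinates live in ℝ^m and ℝ^n). -/

open Matrix Filter Topology
open scoped RealInnerProductSpace

/-! The gap `Φ(w,w) − Φ(w,v) − Φ(v,w) + Φ(v,v)` is the bilinear form of `R + C` evaluated at the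
differences `α̃² − α̃¹` and `β̃² − β̃¹`; in the independent coordinates its matrix is
`reducedMatrix (R + C)`, which for a 2×n game is the single row `u_r + u_c`. The gap is thus
`(α² − α¹) · ⟨u_r + u_c, β² − β¹⟩`, and since `α² − α¹` can be `1` or `-1` while `β² − β¹`
ranges over the vertices `e_j`, it is nonnegative everywhere exactly when `u_r + u_c = 0`. -/

def reducedMatrix {m n : ℕ} (M : Matrix (Fin (m + 1)) (Fin (n + 1)) ℝ) : Matrix (Fin m) (Fin n) ℝ :=
  fun i j => M i.castSucc j.castSucc - M i.castSucc (Fin.last n)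
    - M (Fin.last m) j.castSucc + M (Fin.last m) (Fin.last n)

section Tilde

variable {m n : ℕ}

lemma dotProduct_tilde_sub_tilde (c : Fin (m + 1) → ℝ) (x y : Str m) :
    c ⬝ᵥ (tilde x - tilde y) = ∑ i, (c i.castSucc - c (Fin.last m)) * (x i - y i) := by
  simp only [dotProduct, Fin.sum_univ_castSucc, Pi.sub_apply, tilde, Fin.snoc_castSucc,
    Fin.snoc_last, sub_mul, Finset.sum_sub_distrib, ← Finset.mul_sum]
  ring

lemma tilde_sub_dotProduct_mulVec_tilde_sub (M : Matrix (Fin (m + 1)) (Fin (n + 1)) ℝ)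
    (x x' : Str m) (y y' : Str n) :
    (tilde x - tilde x') ⬝ᵥ (M *ᵥ (tilde y - tilde y')) =
      ∑ i, ∑ j, (x i - x' i) * reducedMatrix M i j * (y j - y' j) := by
  have hrow : ∀ i, (M *ᵥ (tilde y - tilde y')) i =
      ∑ j, (M i j.castSucc - M i (Fin.last n)) * (y j - y' j) :=
    fun i => dotProduct_tilde_sub_tilde (M i) y y'
  rw [dotProduct_comm, dotProduct_tilde_sub_tilde]
  simp only [hrow, ← Finset.sum_sub_distrib, Finset.sum_mul, reducedMatrix]
  refine Finset.sum_congr rfl fun i _ => Finset.sum_congr rfl fun j _ => by ring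

end Tilde

lemma Phi_psd_gap_eq {m n : ℕ} (R C : Matrix (Fin (m + 1)) (Fin (n + 1)) ℝ)
    (v w : Str m × Str n) :
    Phi R C w w - Phi R C w v - Phi R C v w + Phi R C v v =
      (tilde w.1 - tilde v.1) ⬝ᵥ ((R + C) *ᵥ (tilde w.2 - tilde v.2)) := by
  simp only [Phi, Vr, Vc, add_mulVec, mulVec_sub, sub_dotProduct, dotProduct_add, dotProduct_sub]
  ring

lemma reducedMatrix_add_zero_eq_uR_add_uC {n : ℕ} (R C : Matrix (Fin 2) (Fin (n + 1)) ℝ)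
    (j : Fin n) :
    reducedMatrix (R + C) 0 j = uR R j + uC C j := by
  have h0 : (0 : Fin 1).castSucc = 0 := rfl
  have h1 : Fin.last 1 = 1 := rfl
  simp only [reducedMatrix, uR, uC, Matrix.add_apply, h0, h1]
  ring

lemma Phi_psd_gap_eq_of_two_rows {n : ℕ} (R C : Matrix (Fin 2) (Fin (n + 1)) ℝ)
    (v w : Str 1 × Str n) :
    Phi R C w w - Phi R C w v - Phi R C v w + Phi R C v v =
      (w.1 0 - v.1 0) * ∑ j, (uR R j + uC C j) * (w.2 j - v.2 j) := by
  rw [Phi_psd_gap_eq, tilde_sub_dotProduct_mulVec_tilde_sub, Fin.sum_univ_one, Finset.mul_sum]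
  refine Finset.sum_congr rfl fun j _ => ?_
  rw [reducedMatrix_add_zero_eq_uR_add_uC, mul_assoc]

lemma zero_mem_simplexSet (n : ℕ) : (0 : Str n) ∈ simplexSet n :=
  ⟨fun _ => le_rfl, by simp⟩

lemma single_mem_simplexSet {n : ℕ} (j : Fin n) : EuclideanSpace.single j 1 ∈ simplexSet n :=
  ⟨fun i => by by_cases h : i = j <;> simp [h], by simp⟩

/-- a 2×n general-sum game is positive semi-definite if and
only if u_r + u_c = 0 in ℝ^{n-1}. -/
theorem stmt15 {n : ℕ} (R C : Matrix (Fin 2) (Fin (n + 1)) ℝ) :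
    IsPSD (m := 1) R C ↔ ∀ j : Fin n, uR R j + uC C j = 0 := by
  simp only [IsPSD, Phi_psd_gap_eq_of_two_rows]
  constructor
  · intro hpsd j
    have e₀ := single_mem_simplexSet (0 : Fin 1)
    have eⱼ := single_mem_simplexSet j
    have h0 := zero_mem_simplexSet
    have hpos := hpsd (0, 0) (_, _) (h0 1) (h0 n) e₀ eⱼ
    have hneg := hpsd (_, 0) (0, _) e₀ (h0 n) (h0 1) eⱼ
    simp only [Pi.single_eq_same, PiLp.zero_apply, sub_zero, zero_sub, Pi.single_apply, mul_ite,
      mul_one, mul_zero, Finset.sum_ite_eq', Finset.mem_univ, ↓reduceIte, one_mul, neg_mul]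
      at hpos hneg
    linarith
  · intro hu _ _ _ _ _ _
    simp [hu]
end
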